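/- Let e = (1/√χ)[[E₁,0],[0,−E₁]] with χ = 8(n−1) and E₁ the antisymmetric n×n matrix with entries (E₁)₁₂ = 1, (E₁)₂₁ = −1, all others 0. On the perp subspace 𝔪⊥ parameterized as (b, (a₁,b₁,a₂,b₂)) with b ∈ ℝ and a₁,b₁,a₂,b₂ ∈ ℝⁿ⁻², the squared adjoint map ad(e)² acts as ad(e)²(b,(a₁,b₁,a₂,b₂)) = −(1/χ)(4b, (a₁,b₁,a₂,b₂)). In particular ad(e)² has exactly the eigenvalues −4/χ and −1/χ on 𝔪⊥. -/
import Mathlib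


open Matrix

noncomputable section

/-- Embed a vector `v ∈ ℝ^(n−2)` into the last `n−2` coordinates of `ℝⁿ`. -/
def emb {n : ℕ} (v : Fin (n - 2) → ℝ) (j : Fin n) : ℝ :=
  if h : 2 ≤ j.val then v ⟨j.val - 2, by have := j.isLt; omega⟩ else 0

/-- The antisymmetric block `A⊥` with rows `(0,0,a₁),(0,0,a₂),(−a₁ᵀ,−a₂ᵀ,0)`. -/
def Aperp (n : ℕ) (a₁ a₂ : Fin (n - 2) → ℝ) : Matrix (Fin n) (Fin n) ℝ :=
  Matrix.of fun i j =>
    if i.val = 0 then emb a₁ j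
    else if i.val = 1 then emb a₂ j
    else if j.val = 0 then -(emb a₁ i)
    else if j.val = 1 then -(emb a₂ i)
    else 0

/-- The antisymmetric block `B⊥` with rows `(0,b,b₁),(−b,0,b₂),(−b₁ᵀ,−b₂ᵀ,0)`. -/
def Bperp (n : ℕ) (b : ℝ) (b₁ b₂ : Fin (n - 2) → ℝ) : Matrix (Fin n) (Fin n) ℝ :=
  Matrix.of fun i j =>
    if i.val = 0 ∧ j.val = 1 then b
    else if i.val = 1 ∧ j.val = 0 then -b
    else if i.val = 0 then emb b₁ j
    else if i.val = 1 then emb b₂ j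
    else if j.val = 0 then -(emb b₁ i)
    else if j.val = 1 then -(emb b₂ i)
    else 0

/-- The symmetric block `D⊥` with rows `(d,0,d₁),(0,d,d₂),(d₁ᵀ,d₂ᵀ,0)`. -/
def Dperp (n : ℕ) (d : ℝ) (d₁ d₂ : Fin (n - 2) → ℝ) : Matrix (Fin n) (Fin n) ℝ :=
  Matrix.of fun i j =>
    if i.val = 0 ∧ j.val = 0 then d
    else if i.val = 1 ∧ j.val = 1 then d
    else if i.val = 0 then emb d₁ j
    else if i.val = 1 then emb d₂ j
    else if j.val = 0 then emb d₁ i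
    else if j.val = 1 then emb d₂ i
    else 0

/-- The element of 𝔪⊥ parameterized by `(b,(a₁,b₁,a₂,b₂))`. -/
def Mperp (n : ℕ) (b : ℝ) (a₁ b₁ a₂ b₂ : Fin (n - 2) → ℝ) :
    Matrix (Fin n ⊕ Fin n) (Fin n ⊕ Fin n) ℝ :=
  Matrix.fromBlocks (Aperp n a₁ a₂) (Bperp n b b₁ b₂) (Bperp n b b₁ b₂) (-(Aperp n a₁ a₂))

/-- The element of 𝔥⊥ parameterized by `(d,(c₁,d₁,c₂,d₂))`. -/
def Hperp (n : ℕ) (d : ℝ) (c₁ d₁ c₂ d₂ : Fin (n - 2) → ℝ) :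
    Matrix (Fin n ⊕ Fin n) (Fin n ⊕ Fin n) ℝ :=
  Matrix.fromBlocks (Aperp n c₁ c₂) (Dperp n d d₁ d₂) (-(Dperp n d d₁ d₂)) (Aperp n c₁ c₂)

/-- The antisymmetric matrix `E₁` with `(E₁)₁₂ = 1`, `(E₁)₂₁ = −1`. -/
def E1 (n : ℕ) : Matrix (Fin n) (Fin n) ℝ :=
  Matrix.of fun i j =>
    if i.val = 0 ∧ j.val = 1 then (1 : ℝ)
    else if i.val = 1 ∧ j.val = 0 then -1 else 0

/-- The element `e = (1/√χ)[[E₁,0],[0,−E₁]]`, `χ = 8(n−1)`. -/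
def eMat (n : ℕ) : Matrix (Fin n ⊕ Fin n) (Fin n ⊕ Fin n) ℝ :=
  (Real.sqrt (8 * ((n : ℝ) - 1)))⁻¹ • Matrix.fromBlocks (E1 n) 0 0 (-(E1 n))

/-- The adjoint action `ad(e)(X) = eX − Xe`. -/
def adE (n : ℕ) (X : Matrix (Fin n ⊕ Fin n) (Fin n ⊕ Fin n) ℝ) :
    Matrix (Fin n ⊕ Fin n) (Fin n ⊕ Fin n) ℝ :=
  eMat n * X - X * eMat n


variable {n : ℕ}

lemma E1_mul (hn : 3 ≤ n) (M : Matrix (Fin n) (Fin n) ℝ) (i j : Fin n) :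
    (E1 n * M) i j =
      if i.val = 0 then M ⟨1, by omega⟩ j
      else if i.val = 1 then -(M ⟨0, by omega⟩ j) else 0 := by
  rw [Matrix.mul_apply]
  by_cases h0 : i.val = 0
  · rw [Finset.sum_eq_single (⟨1, by omega⟩ : Fin n)]
    · simp [E1, h0]
    · intro k _ hk
      have : k.val ≠ 1 := fun h => hk (Fin.ext h)
      simp [E1, h0, this]
    · simp
  · by_cases h1 : i.val = 1
    · rw [Finset.sum_eq_single (⟨0, by omega⟩ : Fin n)]
      · simp [E1, h0, h1]
      · intro k _ hk
        have : k.val ≠ 0 := fun h => hk (Fin.ext h)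
        simp [E1, h0, h1, this]
      · simp
    · simp [E1, h0, h1]

lemma mul_E1 (hn : 3 ≤ n) (M : Matrix (Fin n) (Fin n) ℝ) (i j : Fin n) :
    (M * E1 n) i j =
      if j.val = 0 then -(M i ⟨1, by omega⟩)
      else if j.val = 1 then M i ⟨0, by omega⟩ else 0 := by
  rw [Matrix.mul_apply]
  by_cases h0 : j.val = 0
  · rw [Finset.sum_eq_single (⟨1, by omega⟩ : Fin n)]
    · simp [E1, h0]
    · intro k _ hk
      have : k.val ≠ 1 := fun h => hk (Fin.ext h)
      simp [E1, h0, this]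
    · simp
  · by_cases h1 : j.val = 1
    · rw [Finset.sum_eq_single (⟨0, by omega⟩ : Fin n)]
      · simp [E1, h0, h1]
      · intro k _ hk
        have : k.val ≠ 0 := fun h => hk (Fin.ext h)
        simp [E1, h0, h1, this]
      · simp
    · simp [E1, h0, h1]
lemma emb_neg (v : Fin (n-2) → ℝ) (j : Fin n) : emb (fun k => -(v k)) j = -(emb v j) := by
  simp only [emb]; split_ifs <;> simp

lemma emb_smul (r : ℝ) (v : Fin (n-2) → ℝ) (j : Fin n) : emb (fun k => r * v k) j = r * emb v j := by
  simp only [emb]; split_ifs <;> simp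

lemma emb_lo (v : Fin (n-2) → ℝ) (j : Fin n) (h : ¬ 2 ≤ j.val) : emb v j = 0 := by
  simp [emb, h]

lemma comm_Aperp (hn : 3 ≤ n) (a₁ a₂ : Fin (n-2) → ℝ) :
    E1 n * Aperp n a₁ a₂ - Aperp n a₁ a₂ * E1 n = Aperp n a₂ (fun k => -(a₁ k)) := by
  ext i j
  rw [Matrix.sub_apply, E1_mul hn, mul_E1 hn]
  by_cases hi0 : i.val = 0 <;> by_cases hi1 : i.val = 1 <;>
    by_cases hj0 : j.val = 0 <;> by_cases hj1 : j.val = 1 <;>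
    simp [Aperp, emb_neg, hi0, hi1, hj0, hj1, emb_lo]
lemma anticomm_Bperp (hn : 3 ≤ n) (b : ℝ) (b₁ b₂ : Fin (n-2) → ℝ) :
    E1 n * Bperp n b b₁ b₂ + Bperp n b b₁ b₂ * E1 n
      = Dperp n (-2*b) b₂ (fun k => -(b₁ k)) := by
  ext i j
  rw [Matrix.add_apply, E1_mul hn, mul_E1 hn]
  by_cases hi0 : i.val = 0 <;> by_cases hi1 : i.val = 1 <;>
    by_cases hj0 : j.val = 0 <;> by_cases hj1 : j.val = 1 <;>
    simp [Bperp, Dperp, emb_neg, hi0, hi1, hj0, hj1, emb_lo] <;> ring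

lemma anticomm_Dperp (hn : 3 ≤ n) (d : ℝ) (d₁ d₂ : Fin (n-2) → ℝ) :
    E1 n * Dperp n d d₁ d₂ + Dperp n d d₁ d₂ * E1 n
      = Bperp n (2*d) d₂ (fun k => -(d₁ k)) := by
  ext i j
  rw [Matrix.add_apply, E1_mul hn, mul_E1 hn]
  by_cases hi0 : i.val = 0 <;> by_cases hi1 : i.val = 1 <;>
    by_cases hj0 : j.val = 0 <;> by_cases hj1 : j.val = 1 <;>
    simp [Bperp, Dperp, emb_neg, hi0, hi1, hj0, hj1, emb_lo] <;> ring
lemma neg_Aperp (a₁ a₂ : Fin (n-2) → ℝ) :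
    Aperp n (fun k => -(a₁ k)) (fun k => -(a₂ k)) = -(Aperp n a₁ a₂) := by
  ext i j
  simp only [Aperp, Matrix.of_apply, Matrix.neg_apply, emb_neg]
  split_ifs <;> ring

lemma neg_Bperp (b : ℝ) (b₁ b₂ : Fin (n-2) → ℝ) :
    Bperp n (-b) (fun k => -(b₁ k)) (fun k => -(b₂ k)) = -(Bperp n b b₁ b₂) := by
  ext i j
  simp only [Bperp, Matrix.of_apply, Matrix.neg_apply, emb_neg]
  split_ifs <;> ring

lemma smul_Mperp (r b : ℝ) (a₁ b₁ a₂ b₂ : Fin (n-2) → ℝ) :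
    r • Mperp n b a₁ b₁ a₂ b₂
      = Mperp n (r*b) (fun k => r * a₁ k) (fun k => r * b₁ k)
          (fun k => r * a₂ k) (fun k => r * b₂ k) := by
  have hA : r • Aperp n a₁ a₂ = Aperp n (fun k => r * a₁ k) (fun k => r * a₂ k) := by
    ext i j
    simp only [Aperp, Matrix.smul_apply, Matrix.of_apply, emb_smul, smul_eq_mul]
    split_ifs <;> ring
  have hB : r • Bperp n b b₁ b₂ = Bperp n (r*b) (fun k => r * b₁ k) (fun k => r * b₂ k) := by
    ext i j
    simp only [Bperp, Matrix.smul_apply, Matrix.of_apply, emb_smul, smul_eq_mul]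
    split_ifs <;> ring
  simp only [Mperp, Matrix.fromBlocks_smul, hA, hB, smul_neg]
lemma fromBlocks_sub' (A A' : Matrix (Fin n) (Fin n) ℝ) (B B' : Matrix (Fin n) (Fin n) ℝ)
    (C C' : Matrix (Fin n) (Fin n) ℝ) (D D' : Matrix (Fin n) (Fin n) ℝ) :
    Matrix.fromBlocks A B C D - Matrix.fromBlocks A' B' C' D'
      = Matrix.fromBlocks (A - A') (B - B') (C - C') (D - D') := by
  ext (i|i) (j|j) <;> simp

lemma adE_sq (hn : 3 ≤ n) (b : ℝ) (a₁ b₁ a₂ b₂ : Fin (n - 2) → ℝ) :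
    adE n (adE n (Mperp n b a₁ b₁ a₂ b₂))
      = -(8 * ((n : ℝ) - 1))⁻¹ • Mperp n (4 * b) a₁ b₁ a₂ b₂ := by
  set c : ℝ := (Real.sqrt (8 * ((n : ℝ) - 1)))⁻¹ with hc
  set F : Matrix (Fin n ⊕ Fin n) (Fin n ⊕ Fin n) ℝ :=
    Matrix.fromBlocks (E1 n) 0 0 (-(E1 n)) with hF
  have hc2 : c * c = (8 * ((n : ℝ) - 1))⁻¹ := by
    have hn' : (3:ℝ) ≤ (n:ℝ) := by exact_mod_cast hn
    have hpos : (0:ℝ) ≤ 8 * ((n : ℝ) - 1) := by nlinarith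
    rw [hc, ← mul_inv, Real.mul_self_sqrt hpos]
  have hX : ∀ X : Matrix (Fin n ⊕ Fin n) (Fin n ⊕ Fin n) ℝ,
      adE n X = c • (F * X - X * F) := by
    intro X
    simp [adE, eMat, Matrix.smul_mul, Matrix.mul_smul, smul_sub, hc, hF]
  have h1 : F * Mperp n b a₁ b₁ a₂ b₂ - Mperp n b a₁ b₁ a₂ b₂ * F
      = Matrix.fromBlocks (Aperp n a₂ (fun k => -(a₁ k)))
          (Dperp n (-2*b) b₂ (fun k => -(b₁ k)))
          (-(Dperp n (-2*b) b₂ (fun k => -(b₁ k))))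
          (Aperp n a₂ (fun k => -(a₁ k))) := by
    rw [← comm_Aperp hn a₁ a₂, ← anticomm_Bperp hn b b₁ b₂]
    simp only [Mperp, hF, Matrix.fromBlocks_multiply, Matrix.zero_mul, Matrix.mul_zero,
      add_zero, zero_add, Matrix.neg_mul, Matrix.mul_neg, neg_neg, neg_zero, sub_zero,
      fromBlocks_sub']
    refine Matrix.fromBlocks_inj.mpr ⟨?_, ?_, ?_, ?_⟩ <;> abel
  have hcc : E1 n * Aperp n a₂ (fun k => -(a₁ k))
      - Aperp n a₂ (fun k => -(a₁ k)) * E1 n = -(Aperp n a₁ a₂) := by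
    rw [comm_Aperp hn, ← neg_Aperp]
  have hdd : E1 n * Dperp n (-2*b) b₂ (fun k => -(b₁ k))
      + Dperp n (-2*b) b₂ (fun k => -(b₁ k)) * E1 n = -(Bperp n (4*b) b₁ b₂) := by
    rw [anticomm_Dperp hn, ← neg_Bperp]
    congr 1
    ring
  have h2 : F * Matrix.fromBlocks (Aperp n a₂ (fun k => -(a₁ k)))
          (Dperp n (-2*b) b₂ (fun k => -(b₁ k)))
          (-(Dperp n (-2*b) b₂ (fun k => -(b₁ k))))
          (Aperp n a₂ (fun k => -(a₁ k)))
      - Matrix.fromBlocks (Aperp n a₂ (fun k => -(a₁ k)))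
          (Dperp n (-2*b) b₂ (fun k => -(b₁ k)))
          (-(Dperp n (-2*b) b₂ (fun k => -(b₁ k))))
          (Aperp n a₂ (fun k => -(a₁ k))) * F
      = -(Mperp n (4*b) a₁ b₁ a₂ b₂) := by
    rw [Mperp, Matrix.fromBlocks_neg, neg_neg, ← hcc, ← hdd]
    simp only [hF, Matrix.fromBlocks_multiply, Matrix.zero_mul, Matrix.mul_zero,
      add_zero, zero_add, Matrix.neg_mul, Matrix.mul_neg, neg_neg, neg_zero, sub_zero,
      fromBlocks_sub']
    refine Matrix.fromBlocks_inj.mpr ⟨?_, ?_, ?_, ?_⟩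
    · abel
    · abel
    · abel
    · rw [← neg_neg (Aperp n a₁ a₂), ← hcc]; abel
  rw [hX, hX, Matrix.smul_mul, Matrix.mul_smul, ← smul_sub, smul_smul, h1, h2, hc2,
    smul_neg, ← neg_smul]
section extract
variable (hn : 3 ≤ n) (b : ℝ) (a₁ b₁ a₂ b₂ : Fin (n-2) → ℝ)

lemma emb_hi (v : Fin (n-2) → ℝ) (k : Fin (n-2)) (hk : k.val + 2 < n) :
    emb v ⟨k.val + 2, hk⟩ = v k := by
  simp only [emb]
  rw [dif_pos (by omega)]
  congr 1

lemma Mp_b : Mperp n b a₁ b₁ a₂ b₂ (Sum.inl ⟨0, by omega⟩) (Sum.inr ⟨1, by omega⟩) = b := by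
  simp [Mperp, Bperp]

lemma Mp_a₁ (k : Fin (n-2)) :
    Mperp n b a₁ b₁ a₂ b₂ (Sum.inl ⟨0, by omega⟩) (Sum.inl ⟨k.val + 2, by omega⟩) = a₁ k := by
  simp [Mperp, Aperp, emb_hi]

lemma Mp_a₂ (k : Fin (n-2)) :
    Mperp n b a₁ b₁ a₂ b₂ (Sum.inl ⟨1, by omega⟩) (Sum.inl ⟨k.val + 2, by omega⟩) = a₂ k := by
  simp [Mperp, Aperp, emb_hi]

lemma Mp_b₁ (k : Fin (n-2)) :
    Mperp n b a₁ b₁ a₂ b₂ (Sum.inl ⟨0, by omega⟩) (Sum.inr ⟨k.val + 2, by omega⟩) = b₁ k := by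
  simp [Mperp, Bperp, emb_hi]

lemma Mp_b₂ (k : Fin (n-2)) :
    Mperp n b a₁ b₁ a₂ b₂ (Sum.inl ⟨1, by omega⟩) (Sum.inr ⟨k.val + 2, by omega⟩) = b₂ k := by
  simp [Mperp, Bperp, emb_hi]

lemma Mperp_zero : Mperp n 0 0 0 0 0 = 0 := by
  have he : ∀ j : Fin n, emb (0 : Fin (n-2) → ℝ) j = 0 := by
    intro j; simp [emb]
  ext (i|i) (j|j) <;>
    simp [Mperp, Aperp, Bperp, he]
end extract
lemma Mperp_inj (hn : 3 ≤ n) {b b' : ℝ} {a₁ b₁ a₂ b₂ a₁' b₁' a₂' b₂' : Fin (n-2) → ℝ}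
    (h : Mperp n b a₁ b₁ a₂ b₂ = Mperp n b' a₁' b₁' a₂' b₂') :
    b = b' ∧ a₁ = a₁' ∧ b₁ = b₁' ∧ a₂ = a₂' ∧ b₂ = b₂' := by
  refine ⟨?_, funext fun k => ?_, funext fun k => ?_, funext fun k => ?_, funext fun k => ?_⟩
  · rw [← Mp_b hn b a₁ b₁ a₂ b₂, h, Mp_b hn]
  · rw [← Mp_a₁ hn b a₁ b₁ a₂ b₂ k, h, Mp_a₁ hn]
  · rw [← Mp_b₁ hn b a₁ b₁ a₂ b₂ k, h, Mp_b₁ hn]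
  · rw [← Mp_a₂ hn b a₁ b₁ a₂ b₂ k, h, Mp_a₂ hn]
  · rw [← Mp_b₂ hn b a₁ b₁ a₂ b₂ k, h, Mp_b₂ hn]

lemma Mperp_congr {b b' : ℝ} {a₁ b₁ a₂ b₂ a₁' b₁' a₂' b₂' : Fin (n-2) → ℝ}
    (h0 : b = b') (h1 : ∀ k, a₁ k = a₁' k) (h2 : ∀ k, b₁ k = b₁' k)
    (h3 : ∀ k, a₂ k = a₂' k) (h4 : ∀ k, b₂ k = b₂' k) :
    Mperp n b a₁ b₁ a₂ b₂ = Mperp n b' a₁' b₁' a₂' b₂' := by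
  rw [h0, funext h1, funext h2, funext h3, funext h4]

/-- `ad(e)²` acts on 𝔪⊥ by `ad(e)²(b,(a₁,b₁,a₂,b₂)) = −(1/χ)(4b,(a₁,b₁,a₂,b₂))`,
`χ = 8(n−1)`; in particular `ad(e)²` has exactly the eigenvalues `−4/χ` and `−1/χ`
on 𝔪⊥. -/
theorem adE_sq_on_mperp (n : ℕ) (hn : 3 ≤ n) :
    (∀ (b : ℝ) (a₁ b₁ a₂ b₂ : Fin (n - 2) → ℝ),
      adE n (adE n (Mperp n b a₁ b₁ a₂ b₂))
        = -(8 * ((n : ℝ) - 1))⁻¹ • Mperp n (4 * b) a₁ b₁ a₂ b₂)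
    ∧ (∀ μ : ℝ,
      (∃ (b : ℝ) (a₁ b₁ a₂ b₂ : Fin (n - 2) → ℝ),
        Mperp n b a₁ b₁ a₂ b₂ ≠ 0 ∧
        adE n (adE n (Mperp n b a₁ b₁ a₂ b₂)) = μ • Mperp n b a₁ b₁ a₂ b₂)
      ↔ (μ = -4 / (8 * ((n : ℝ) - 1)) ∨ μ = -1 / (8 * ((n : ℝ) - 1)))) := by
  have hn' : (3:ℝ) ≤ (n:ℝ) := by exact_mod_cast hn
  have hχ : (8 * ((n : ℝ) - 1)) ≠ 0 := by nlinarith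
  have hχ1 : ((n : ℝ) - 1) ≠ 0 := by nlinarith
  refine ⟨adE_sq hn, fun μ => ⟨?_, ?_⟩⟩
  · rintro ⟨b, a₁, b₁, a₂, b₂, hne, heq⟩
    rw [adE_sq hn, smul_Mperp, smul_Mperp] at heq
    obtain ⟨hb, ha₁, hb₁, ha₂, hb₂⟩ := Mperp_inj hn heq
    have key : ∀ x : ℝ, x ≠ 0 → -(8 * ((n : ℝ) - 1))⁻¹ * x = μ * x →
        μ = -1 / (8 * ((n : ℝ) - 1)) := by
      intro x hx h
      have h2 : -(8 * ((n : ℝ) - 1))⁻¹ = μ := mul_right_cancel₀ hx h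
      rw [← h2, neg_div, one_div]
    by_cases hb0 : b = 0
    · right
      have hvec : ∃ k, a₁ k ≠ 0 ∨ b₁ k ≠ 0 ∨ a₂ k ≠ 0 ∨ b₂ k ≠ 0 := by
        by_contra hall
        push_neg at hall
        apply hne
        have e1 : a₁ = 0 := funext fun k => (hall k).1
        have e2 : b₁ = 0 := funext fun k => (hall k).2.1
        have e3 : a₂ = 0 := funext fun k => (hall k).2.2.1
        have e4 : b₂ = 0 := funext fun k => (hall k).2.2.2
        rw [hb0, e1, e2, e3, e4]
        exact Mperp_zero
      obtain ⟨k, hk⟩ := hvec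
      rcases hk with h | h | h | h
      · exact key _ h (congrFun ha₁ k)
      · exact key _ h (congrFun hb₁ k)
      · exact key _ h (congrFun ha₂ k)
      · exact key _ h (congrFun hb₂ k)
    · left
      have h4 : -(8 * ((n : ℝ) - 1))⁻¹ * 4 = μ :=
        mul_right_cancel₀ hb0 (by rw [← hb]; ring)
      rw [← h4, div_eq_mul_inv]
      ring
  · rintro (hμ | hμ)
    · refine ⟨1, 0, 0, 0, 0, ?_, ?_⟩
      · intro h0
        have := congrFun (congrFun h0 (Sum.inl ⟨0, by omega⟩)) (Sum.inr ⟨1, by omega⟩)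
        rw [Mp_b hn] at this
        simp at this
      · rw [adE_sq hn, smul_Mperp, smul_Mperp, hμ]
        refine Mperp_congr ?_ (fun k => ?_) (fun k => ?_) (fun k => ?_) (fun k => ?_) <;>
          simp <;> field_simp <;> ring
    · refine ⟨0, (fun _ => 1), 0, 0, 0, ?_, ?_⟩
      · intro h0
        have hk : 0 < n - 2 := by omega
        have := congrFun (congrFun h0 (Sum.inl ⟨0, by omega⟩))
          (Sum.inl ⟨(⟨0, hk⟩ : Fin (n-2)).val + 2, by omega⟩)
        rw [Mp_a₁ hn] at this
        simp at this
      · rw [adE_sq hn, smul_Mperp, smul_Mperp, hμ]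
        refine Mperp_congr ?_ (fun k => ?_) (fun k => ?_) (fun k => ?_) (fun k => ?_) <;>
          simp <;> field_simp <;> ring

end
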